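/- arXiv:2208.13402 — 2 statements merged into one kernel-verified Lean document; each statement's English description precedes it below -/
import Mathlib

section
/- Let m ≥ 2 be an integer, κ ∈ ℝ, λ > 0, and R > 0 with √κ·R < π when κ > 0. Let u : [0,R] → ℝ be smooth (the restriction of a C^∞ function on an open interval containing [0,R]), positive on [0,R], with u'(0) = 0, and satisfying the ODE u''(r) + (m−1)·(sn_κ'(r)/sn_κ(r))·u'(r) = −λ·u(r) for all r ∈ (0,R). Then u'(r) < 0 for every r ∈ (0,R]. -/
open Set Filter

/-- The generalized sine function `sn_κ` of the simply connected space form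
of constant sectional curvature `κ`. -/
noncomputable def sn (κ : ℝ) : ℝ → ℝ := fun r =>
  if 0 < κ then Real.sin (Real.sqrt κ * r) / Real.sqrt κ
  else if κ = 0 then r
  else Real.sinh (Real.sqrt (-κ) * r) / Real.sqrt (-κ)

noncomputable def snd (κ : ℝ) : ℝ → ℝ := fun r =>
  if 0 < κ then Real.cos (Real.sqrt κ * r)
  else if κ = 0 then 1
  else Real.cosh (Real.sqrt (-κ) * r)

lemma sn_hasDerivAt (κ r : ℝ) : HasDerivAt (sn κ) (snd κ r) r := by
  rcases lt_trichotomy 0 κ with hκ | hκ | hκ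
  · have hs : Real.sqrt κ ≠ 0 := ne_of_gt (Real.sqrt_pos.mpr hκ)
    have h1 : HasDerivAt (fun x : ℝ => Real.sqrt κ * x) (Real.sqrt κ) r := by
      simpa using (hasDerivAt_id r).const_mul (Real.sqrt κ)
    have h2 := ((Real.hasDerivAt_sin (Real.sqrt κ * r)).comp r h1).div_const (Real.sqrt κ)
    have heq : sn κ = fun x => Real.sin (Real.sqrt κ * x) / Real.sqrt κ := by
      funext x; simp [sn, hκ]
    have hv : snd κ r = Real.cos (Real.sqrt κ * r) * Real.sqrt κ / Real.sqrt κ := by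
      simp [snd, hκ]; field_simp
    rw [heq, hv]; exact h2
  · subst hκ
    have heq : sn 0 = fun x : ℝ => x := by funext x; simp [sn]
    have hv : snd 0 r = 1 := by simp [snd]
    rw [heq, hv]; exact hasDerivAt_id r
  · have hκ' : ¬ 0 < κ := not_lt.mpr hκ.le
    have hs : Real.sqrt (-κ) ≠ 0 := ne_of_gt (Real.sqrt_pos.mpr (by linarith))
    have h1 : HasDerivAt (fun x : ℝ => Real.sqrt (-κ) * x) (Real.sqrt (-κ)) r := by
      simpa using (hasDerivAt_id r).const_mul (Real.sqrt (-κ))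
    have h2 := ((Real.hasDerivAt_sinh (Real.sqrt (-κ) * r)).comp r h1).div_const (Real.sqrt (-κ))
    have heq : sn κ = fun x => Real.sinh (Real.sqrt (-κ) * x) / Real.sqrt (-κ) := by
      funext x; simp [sn, hκ', hκ.ne]
    have hv : snd κ r = Real.cosh (Real.sqrt (-κ) * r) * Real.sqrt (-κ) / Real.sqrt (-κ) := by
      simp [snd, hκ', hκ.ne]; field_simp
    rw [heq, hv]; exact h2

lemma sn_zero (κ : ℝ) : sn κ 0 = 0 := by
  simp [sn]

lemma sn_pos {κ R : ℝ} (hR : 0 < R) (hκR : 0 < κ → Real.sqrt κ * R < Real.pi)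
    {r : ℝ} (hr : r ∈ Set.Ioc (0:ℝ) R) : 0 < sn κ r := by
  rcases lt_trichotomy 0 κ with hκ | hκ | hκ
  · have hs : 0 < Real.sqrt κ := Real.sqrt_pos.mpr hκ
    have h1 : 0 < Real.sqrt κ * r := mul_pos hs hr.1
    have h2 : Real.sqrt κ * r < Real.pi :=
      lt_of_le_of_lt (mul_le_mul_of_nonneg_left hr.2 hs.le) (hκR hκ)
    simp only [sn, if_pos hκ]
    exact div_pos (Real.sin_pos_of_pos_of_lt_pi h1 h2) hs
  · subst hκ
    simpa [sn] using hr.1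
  · have hκ' : ¬ 0 < κ := not_lt.mpr hκ.le
    have hs : 0 < Real.sqrt (-κ) := Real.sqrt_pos.mpr (by linarith)
    simp only [sn, if_neg hκ', if_neg hκ.ne]
    exact div_pos (Real.sinh_pos_iff.mpr (mul_pos hs hr.1)) hs

/-- a positive radial solution of the eigenvalue ODE on a geodesic ball
in the space form of curvature `κ` with `u'(0) = 0` has `u' < 0` on `(0, R]`. -/
theorem stmt0 (m : ℕ) (hm : 2 ≤ m) (κ lam R a b : ℝ)
    (hlam : 0 < lam) (hR : 0 < R)
    (hκR : 0 < κ → Real.sqrt κ * R < Real.pi)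
    (ha : a < 0) (hb : R < b)
    (u : ℝ → ℝ) (hu : ContDiffOn ℝ (⊤ : ℕ∞) u (Set.Ioo a b))
    (hpos : ∀ r ∈ Set.Icc (0:ℝ) R, 0 < u r)
    (hu'0 : deriv u 0 = 0)
    (hode : ∀ r ∈ Set.Ioo (0:ℝ) R,
      deriv (deriv u) r + ((m : ℝ) - 1) * (deriv (sn κ) r / sn κ r) * deriv u r
        = -lam * u r) :
    ∀ r ∈ Set.Ioc (0:ℝ) R, deriv u r < 0 := by
  set w : ℝ → ℝ := fun r => sn κ r ^ (m - 1) * deriv u r with hw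
  have hsub : Set.Icc (0:ℝ) R ⊆ Set.Ioo a b := fun x hx =>
    ⟨lt_of_lt_of_le ha hx.1, lt_of_le_of_lt hx.2 hb⟩
  have hopen : IsOpen (Set.Ioo a b) := isOpen_Ioo
  -- continuity of deriv u on Ioo a b
  have hcd : ContinuousOn (deriv u) (Set.Ioo a b) :=
    hu.continuousOn_deriv_of_isOpen hopen (by norm_num)
  -- deriv u differentiable on Ioo a b
  have hdd : DifferentiableOn ℝ (deriv u) (Set.Ioo a b) := by
    have := hu.deriv_of_isOpen (m := (⊤ : ℕ∞)) hopen (by simp)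
    exact this.differentiableOn (by norm_num)
  -- continuity of sn κ
  have hsncont : Continuous (sn κ) := by
    have : Differentiable ℝ (sn κ) := fun x => (sn_hasDerivAt κ x).differentiableAt
    exact this.continuous
  -- continuity of w on Icc 0 R
  have hwcont : ContinuousOn w (Set.Icc 0 R) := by
    exact ((hsncont.pow (m-1)).continuousOn).mul (hcd.mono hsub)
  -- derivative of w on Ioo 0 R
  have hwderiv : ∀ r ∈ Set.Ioo (0:ℝ) R, deriv w r < 0 := by
    intro r hr
    have hrmem : r ∈ Set.Ioo a b := hsub ⟨hr.1.le, hr.2.le⟩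
    have hsnr : 0 < sn κ r := sn_pos hR hκR ⟨hr.1, hr.2.le⟩
    have h1 : HasDerivAt (fun x => sn κ x ^ (m-1))
        (↑(m-1) * sn κ r ^ (m-1-1) * snd κ r) r := (sn_hasDerivAt κ r).pow (m-1)
    have h2 : HasDerivAt (deriv u) (deriv (deriv u) r) r :=
      ((hdd.differentiableAt (hopen.mem_nhds hrmem))).hasDerivAt
    have h3 : HasDerivAt w
        ((↑(m-1) * sn κ r ^ (m-1-1) * snd κ r) * deriv u r
          + sn κ r ^ (m-1) * deriv (deriv u) r) r := h1.mul h2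
    rw [h3.deriv]
    have hode' := hode r hr
    rw [(sn_hasDerivAt κ r).deriv] at hode'
    have hupos : 0 < u r := hpos r ⟨hr.1.le, hr.2.le⟩
    have hu'' : deriv (deriv u) r
        = -lam * u r - ((m : ℝ) - 1) * (snd κ r / sn κ r) * deriv u r := by
      linarith
    rw [hu'']
    have hm1 : (↑(m-1) : ℝ) = (m : ℝ) - 1 := by
      push_cast [Nat.cast_sub (by omega : 1 ≤ m)]; ring
    have hpow : sn κ r ^ (m-1) = sn κ r ^ (m-1-1) * sn κ r := by
      rw [← pow_succ]
      congr 1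
      omega
    have hpowpos : 0 < sn κ r ^ (m-1) := pow_pos hsnr _
    rw [hm1, hpow]
    have hkey : ((m:ℝ)-1) * sn κ r ^ (m-1-1) * snd κ r * deriv u r
        + sn κ r ^ (m-1-1) * sn κ r *
          (-lam * u r - ((m:ℝ)-1) * (snd κ r / sn κ r) * deriv u r)
        = sn κ r ^ (m-1-1) * sn κ r * (-lam * u r) := by
      field_simp
      ring
    rw [hkey, ← hpow]
    have : 0 < lam * u r := mul_pos hlam hupos
    nlinarith
  -- w is strictly decreasing on [0,R]
  have hanti : StrictAntiOn w (Set.Icc 0 R) := by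
    apply strictAntiOn_of_deriv_neg (convex_Icc 0 R) hwcont
    rw [interior_Icc]
    exact hwderiv
  have hw0 : w 0 = 0 := by
    simp [hw, hu'0]
  intro r hr
  have hlt : w r < 0 := by
    have := hanti ⟨le_refl 0, hR.le⟩ ⟨hr.1.le, hr.2⟩ hr.1
    rwa [hw0] at this
  have hsnr : 0 < sn κ r ^ (m-1) := pow_pos (sn_pos hR hκR hr) _
  by_contra h
  push_neg at h
  exact absurd (mul_nonneg hsnr.le h) (not_le.mpr hlt)
end

section
/- Let m ≥ 2 be an integer, κ > 0, α > 0, λ ∈ ℝ, and R > 0 with √κ·R < π/2 and √κ·tan(√κ·R) ≤ α. Suppose u : [0,R] → ℝ is smooth (the restriction of a C^∞ function on an open interval containing [0,R]), positive on [0,R], with u'(0) = 0, u'(R) + α·u(R) = 0, and satisfying the ODE u''(r) + (m−1)·(sn_κ'(r)/sn_κ(r))·u'(r) = −λ·u(r) for all r ∈ (0,R). Then λ ≥ m·κ. -/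
open Set Filter

/-- if `√κ tan(√κ R) ≤ α`, then the first Robin eigenvalue of a geodesic
ball of radius `R` in the sphere of curvature `κ > 0` is at least `m κ`. -/
theorem stmt2 (m : ℕ) (hm : 2 ≤ m) (κ α lam R a b : ℝ)
    (hκ : 0 < κ) (hα : 0 < α) (hR : 0 < R)
    (hRπ : Real.sqrt κ * R < Real.pi / 2)
    (htan : Real.sqrt κ * Real.tan (Real.sqrt κ * R) ≤ α)
    (ha : a < 0) (hb : R < b)
    (u : ℝ → ℝ) (hu : ContDiffOn ℝ (⊤ : ℕ∞) u (Set.Ioo a b))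
    (hpos : ∀ r ∈ Set.Icc (0:ℝ) R, 0 < u r)
    (hu'0 : deriv u 0 = 0)
    (hbc : deriv u R + α * u R = 0)
    (hode : ∀ r ∈ Set.Ioo (0:ℝ) R,
      deriv (deriv u) r + ((m : ℝ) - 1) * (deriv (sn κ) r / sn κ r) * deriv u r
        = -lam * u r) :
    (m : ℝ) * κ ≤ lam := by
  by_contra hcon
  push_neg at hcon
  obtain ⟨k, rfl⟩ : ∃ k, m = k + 2 := ⟨m - 2, by omega⟩
  set s := Real.sqrt κ with hs_def
  have hs : 0 < s := Real.sqrt_pos.2 hκ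
  have hs2 : s ^ 2 = κ := Real.sq_sqrt hκ.le
  have hsn : sn κ = fun r => Real.sin (s * r) / s := by
    funext r; simp [sn, if_pos hκ, hs_def]
  have hsn' : ∀ x : ℝ, HasDerivAt (sn κ) (Real.cos (s * x)) x := by
    intro x
    rw [hsn]
    have h1 : HasDerivAt (fun r => Real.sin (s*r)) (Real.cos (s*x) * s) x :=
      (Real.hasDerivAt_sin (s*x)).comp x (by simpa using (hasDerivAt_id x).const_mul s)
    have := h1.div_const s
    convert this using 1
    · rfl
    · rfl
    field_simp
  have hIccIoo : Set.Icc (0:ℝ) R ⊆ Set.Ioo a b := fun r hr =>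
    ⟨lt_of_lt_of_le ha hr.1, lt_of_le_of_lt hr.2 hb⟩
  have hu' : ContDiffOn ℝ (⊤ : ℕ∞) u (Set.Ioo a b) := hu.of_le (by simp)
  have hud : ContDiffOn ℝ (⊤ : ℕ∞) (deriv u) (Set.Ioo a b) :=
    ((contDiffOn_infty_iff_deriv_of_isOpen isOpen_Ioo).1 hu').2
  have hu1 : ∀ x ∈ Set.Ioo a b, HasDerivAt u (deriv u x) x := fun x hx =>
    ((hu'.differentiableOn (by simp)).differentiableAt (isOpen_Ioo.mem_nhds hx)).hasDerivAt
  have hu2 : ∀ x ∈ Set.Ioo a b, HasDerivAt (deriv u) (deriv (deriv u) x) x := fun x hx =>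
    ((hud.differentiableOn (by simp)).differentiableAt (isOpen_Ioo.mem_nhds hx)).hasDerivAt
  set g : ℝ → ℝ := fun r =>
    sn κ r ^ (k+1) * (deriv u r * Real.cos (s*r) + u r * (Real.sin (s*r) * s)) with hg_def
  -- derivative of g on (0,R)
  have hkey : ∀ r ∈ Set.Ioo (0:ℝ) R, HasDerivAt g
      ((((k:ℝ)+2) * κ - lam) * (u r * Real.cos (s*r) * sn κ r ^ (k+1))) r := by
    intro r hr
    have hrab : r ∈ Set.Ioo a b := ⟨lt_trans ha hr.1, lt_trans hr.2 hb⟩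
    have hsrR : s * r < s * R := mul_lt_mul_of_pos_left hr.2 hs
    have hS : 0 < Real.sin (s*r) :=
      Real.sin_pos_of_pos_of_lt_pi (mul_pos hs hr.1)
        (lt_trans (lt_trans hsrR hRπ) (by linarith [Real.pi_pos]))
    have hsinD : HasDerivAt (fun x => Real.sin (s*x)) (Real.cos (s*r) * s) r :=
      (Real.hasDerivAt_sin (s*r)).comp r (by simpa using (hasDerivAt_id r).const_mul s)
    have hcosD : HasDerivAt (fun x => Real.cos (s*x)) (-Real.sin (s*r) * s) r :=
      (Real.hasDerivAt_cos (s*r)).comp r (by simpa using (hasDerivAt_id r).const_mul s)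
    have hw : HasDerivAt (fun x => sn κ x ^ (k+1))
        ((↑(k+1) : ℝ) * sn κ r ^ k * Real.cos (s*r)) r := by
      simpa using (hsn' r).fun_pow (k+1)
    have hB : HasDerivAt (fun x => deriv u x * Real.cos (s*x) + u x * (Real.sin (s*x) * s))
        ((deriv (deriv u) r * Real.cos (s*r) + deriv u r * (-Real.sin (s*r) * s))
          + (deriv u r * (Real.sin (s*r) * s) + u r * (Real.cos (s*r) * s * s))) r :=
      ((hu2 r hrab).mul hcosD).add ((hu1 r hrab).mul (hsinD.mul_const s))
    have hgd := hw.mul hB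
    convert hgd using 1
    · rfl
    · rfl
    · rfl
    -- now prove the derivative values are equal
    have hU'' : deriv (deriv u) r
        = -lam * u r - ((k:ℝ)+1) * (Real.cos (s*r) * s / Real.sin (s*r)) * deriv u r := by
      have h := hode r hr
      rw [(hsn' r).deriv, hsn] at h
      push_cast at h
      rw [div_div_eq_mul_div] at h
      linarith
    simp only [hsn, hU'']
    rw [← hs2]
    push_cast
    rw [div_pow, div_pow]
    field_simp
    ring
  -- g is strictly monotone on [0,R]
  have hsnc : Continuous (sn κ) := by
    rw [hsn]
    exact (Real.continuous_sin.comp (continuous_const.mul continuous_id)).div_const s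
  have hgc : ContinuousOn g (Set.Icc 0 R) := by
    apply ((hsnc.pow (k+1)).continuousOn).mul
    apply ContinuousOn.add
    · exact (hud.continuousOn.mono hIccIoo).mul
        ((Real.continuous_cos.comp (continuous_const.mul continuous_id)).continuousOn)
    · exact (hu'.continuousOn.mono hIccIoo).mul
        (((Real.continuous_sin.comp (continuous_const.mul continuous_id)).mul
          continuous_const).continuousOn)
  have hmono : StrictMonoOn g (Set.Icc 0 R) := by
    apply strictMonoOn_of_deriv_pos (convex_Icc 0 R) hgc
    intro x hx
    rw [interior_Icc] at hx
    rw [(hkey x hx).deriv]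
    have hx' : x ∈ Set.Icc (0:ℝ) R := ⟨hx.1.le, hx.2.le⟩
    have hsxR : s * x < s * R := mul_lt_mul_of_pos_left hx.2 hs
    have hC : 0 < Real.cos (s*x) := Real.cos_pos_of_mem_Ioo
      ⟨by nlinarith [Real.pi_pos, mul_pos hs hx.1], lt_trans hsxR hRπ⟩
    have hS : 0 < Real.sin (s*x) :=
      Real.sin_pos_of_pos_of_lt_pi (mul_pos hs hx.1)
        (lt_trans (lt_trans hsxR hRπ) (by linarith [Real.pi_pos]))
    have hsnx : 0 < sn κ x := by simp only [hsn]; exact div_pos hS hs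
    have hlam : 0 < ((k:ℝ)+2) * κ - lam := by push_cast at hcon; linarith
    have := hpos x hx'
    positivity
  -- g 0 = 0
  have hg0 : g 0 = 0 := by
    simp [hg_def, hsn]
  -- g R ≤ 0
  have hgR : g R ≤ 0 := by
    have hC : 0 < Real.cos (s*R) := Real.cos_pos_of_mem_Ioo
      ⟨by nlinarith [Real.pi_pos, mul_pos hs hR], hRπ⟩
    have htan' : Real.sin (s*R) * s ≤ α * Real.cos (s*R) := by
      rw [Real.tan_eq_sin_div_cos, ← mul_div_assoc] at htan
      have := (div_le_iff₀ hC).1 htan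
      linarith
    have huR : 0 < u R := hpos R ⟨hR.le, le_refl R⟩
    have hinner : deriv u R * Real.cos (s*R) + u R * (Real.sin (s*R) * s) ≤ 0 := by
      have hduR : deriv u R = -α * u R := by linarith
      rw [hduR]
      nlinarith
    have hsnR : 0 ≤ sn κ R ^ (k+1) := by
      have h0 : 0 ≤ Real.sin (s*R) := Real.sin_nonneg_of_nonneg_of_le_pi
        (by positivity) (by linarith [Real.pi_pos, hRπ])
      have : 0 ≤ sn κ R := by simp only [hsn]; exact div_nonneg h0 hs.le
      positivity
    exact mul_nonpos_of_nonneg_of_nonpos hsnR hinner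
  have := hmono ⟨le_refl 0, hR.le⟩ ⟨hR.le, le_refl R⟩ hR
  linarith
end
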